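/- For nonnegative integers m ≥ 1, n, p with 1 ≤ p ≤ m, and sequences of nonnegative integers a_1,...,a_m and c_1,...,c_m, the sum over all tuples (k_1,...,k_m) with k_1+...+k_m = n of [∏_{i=1}^m C(a_i,k_i)C(k_i,c_i)] * k_p, multiplied by (A_0 - C_0), equals C(A_0 - C_0, n - C_0) * [∏_{i=1}^m C(a_i,c_i)] * ((n - C_0) a_p + (A_0 - n) c_p). -/

import Mathlib

open Finset


theorem sum_adt_succ {M : Type*} [AddCommMonoid M] (k n : ℕ) (f : (Fin (k+1) → ℕ) → M) :
    ∑ x ∈ Finset.Nat.antidiagonalTuple (k+1) n, f x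
      = ∑ ij ∈ Finset.HasAntidiagonal.antidiagonal n, ∑ y ∈ Finset.Nat.antidiagonalTuple k ij.2,
          f (Fin.cons ij.1 y) := by
  rw [Finset.sum_sigma']
  refine Finset.sum_nbij' (fun x => (⟨(x 0, ∑ i : Fin k, x i.succ), Fin.tail x⟩ : Σ _ : ℕ × ℕ, (Fin k → ℕ)))
    (fun y => Fin.cons y.1.1 y.2) ?_ ?_ ?_ ?_ ?_
  · intro x hx
    rw [Finset.Nat.mem_antidiagonalTuple] at hx
    refine Finset.mem_sigma.mpr ⟨?_, ?_⟩
    · rw [Finset.HasAntidiagonal.mem_antidiagonal]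
      rw [← hx, Fin.sum_univ_succ]
    · rw [Finset.Nat.mem_antidiagonalTuple]; rfl
  · intro y hy
    rw [Finset.mem_sigma] at hy
    obtain ⟨h1, h2⟩ := hy
    rw [Finset.HasAntidiagonal.mem_antidiagonal] at h1
    rw [Finset.Nat.mem_antidiagonalTuple] at h2 ⊢
    rw [Fin.sum_univ_succ]
    simp [h2, h1]
  · intro x hx; simp [Fin.tail]
  · intro y hy
    rw [Finset.mem_sigma] at hy
    obtain ⟨h1, h2⟩ := hy
    rw [Finset.Nat.mem_antidiagonalTuple] at h2
    ext : 1
    · simp [Fin.tail, h2]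
    · simp [Fin.tail]
  · intro x hx; simp [Fin.tail]
/-- multivariate Vandermonde -/
theorem vand : ∀ (m N : ℕ) (b : Fin m → ℕ),
    ∑ j ∈ Finset.Nat.antidiagonalTuple m N, ∏ i, (b i).choose (j i)
      = (∑ i, b i).choose N := by
  intro m
  induction m with
  | zero =>
    intro N b
    cases N with
    | zero => simp
    | succ N => simp
  | succ m ih =>
    intro N b
    rw [sum_adt_succ]
    have : ∀ ij ∈ Finset.HasAntidiagonal.antidiagonal N,
        (∑ y ∈ Finset.Nat.antidiagonalTuple m ij.2, ∏ i, (b i).choose ((Fin.cons ij.1 y : Fin (m+1) → ℕ) i))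
          = (b 0).choose ij.1 * (∑ i : Fin m, b i.succ).choose ij.2 := by
      intro ij _
      rw [← ih ij.2 (fun i => b i.succ), Finset.mul_sum]
      refine Finset.sum_congr rfl fun y _ => ?_
      rw [Fin.prod_univ_succ]
      simp
    rw [Finset.sum_congr rfl this, ← Nat.add_choose_eq, ← Fin.sum_univ_succ]

theorem vand2w (x y N : ℕ) :
    ∑ p ∈ Finset.HasAntidiagonal.antidiagonal (N+1), p.1 * x.choose p.1 * y.choose p.2
      = x * ((x - 1) + y).choose N := by
  rw [Finset.Nat.sum_antidiagonal_succ]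
  cases x with
  | zero => simp
  | succ x =>
    have step : ∀ p ∈ Finset.HasAntidiagonal.antidiagonal N,
        (p.1 + 1) * (x+1).choose (p.1+1) * y.choose p.2
          = (x+1) * (x.choose p.1 * y.choose p.2) := by
      intro p _
      have key : (x+1) * x.choose p.1 = (x+1).choose (p.1+1) * (p.1+1) :=
        Nat.add_one_mul_choose_eq x p.1
      rw [show (p.1+1) * (x+1).choose (p.1+1) * y.choose p.2
            = ((x+1).choose (p.1+1) * (p.1+1)) * y.choose p.2 from by ring, ← key]
      ring
    rw [show ((0:ℕ), N+1).1 * (x+1).choose (0, N+1).1 * y.choose (0, N+1).2 = 0 from by simp,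
      zero_add, Finset.sum_congr rfl step, ← Finset.mul_sum, ← Nat.add_choose_eq]
    simp

theorem vandw : ∀ (m N : ℕ) (b : Fin m → ℕ) (p : Fin m),
    ∑ j ∈ Finset.Nat.antidiagonalTuple m (N+1), (∏ i, (b i).choose (j i)) * j p
      = b p * ((∑ i, b i) - 1).choose N := by
  intro m
  induction m with
  | zero => intro N b p; exact absurd p.2 (by simp)
  | succ m ih =>
    intro N b p
    rw [sum_adt_succ]
    induction p using Fin.cases with
    | zero =>
      have h1 : ∀ ij ∈ Finset.HasAntidiagonal.antidiagonal (N+1),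
          (∑ y ∈ Finset.Nat.antidiagonalTuple m ij.2,
            (∏ i, (b i).choose ((Fin.cons ij.1 y : Fin (m+1) → ℕ) i)) * (Fin.cons ij.1 y : Fin (m+1) → ℕ) 0)
          = ij.1 * (b 0).choose ij.1 * (∑ i : Fin m, b i.succ).choose ij.2 := by
        intro ij _
        have : ∀ y ∈ Finset.Nat.antidiagonalTuple m ij.2,
            (∏ i, (b i).choose ((Fin.cons ij.1 y : Fin (m+1) → ℕ) i)) * (Fin.cons ij.1 y : Fin (m+1) → ℕ) 0
              = (ij.1 * (b 0).choose ij.1) * (∏ i : Fin m, (b i.succ).choose (y i)) := by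
          intro y _
          rw [Fin.prod_univ_succ]
          simp [mul_comm, mul_assoc, mul_left_comm]
        rw [Finset.sum_congr rfl this, ← Finset.mul_sum, vand, mul_assoc]
      rw [Finset.sum_congr rfl h1, vand2w]
      cases hb : b 0 with
      | zero => simp [hb]
      | succ x =>
        congr 2
        rw [Fin.sum_univ_succ, hb]
        omega
    | succ q =>
      have h1 : ∀ ij ∈ Finset.HasAntidiagonal.antidiagonal (N+1),
          (∑ y ∈ Finset.Nat.antidiagonalTuple m ij.2,
            (∏ i, (b i).choose ((Fin.cons ij.1 y : Fin (m+1) → ℕ) i)) * (Fin.cons ij.1 y : Fin (m+1) → ℕ) q.succ)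
          = (b 0).choose ij.1 * ∑ y ∈ Finset.Nat.antidiagonalTuple m ij.2,
              (∏ i : Fin m, (b i.succ).choose (y i)) * y q := by
        intro ij _
        rw [Finset.mul_sum]
        refine Finset.sum_congr rfl fun y _ => ?_
        rw [Fin.prod_univ_succ]
        simp [mul_assoc]
      rw [Finset.sum_congr rfl h1]
      rw [Finset.Nat.sum_antidiagonal_succ']
      have h0 : (∑ y ∈ Finset.Nat.antidiagonalTuple m 0,
          (∏ i : Fin m, (b i.succ).choose (y i)) * y q) = 0 := by
        rw [Finset.Nat.antidiagonalTuple_zero_right]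
        simp
      rw [h0, mul_zero, zero_add]
      have h2 : ∀ ij ∈ Finset.HasAntidiagonal.antidiagonal N,
          (b 0).choose ij.1 * ∑ y ∈ Finset.Nat.antidiagonalTuple m (ij.2+1),
              (∏ i : Fin m, (b i.succ).choose (y i)) * y q
          = b q.succ * ((b 0).choose ij.1 * ((∑ i : Fin m, b i.succ) - 1).choose ij.2) := by
        intro ij _
        rw [ih ij.2 (fun i => b i.succ) q]
        ring
      rw [Finset.sum_congr rfl h2, ← Finset.mul_sum, ← Nat.add_choose_eq]
      cases hBt : (∑ i : Fin m, b i.succ) with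
      | zero =>
        have : b q.succ = 0 := by
          have := Finset.single_le_sum (f := fun i : Fin m => b i.succ)
            (fun i _ => Nat.zero_le _) (Finset.mem_univ q)
          rw [hBt] at this
          exact Nat.le_zero.mp this
        simp [this]
      | succ Bt =>
        congr 2
        rw [Fin.sum_univ_succ, hBt]
        exact congrArg (b 0 + ·) rfl |>.trans (Nat.add_sub_assoc (Nat.succ_le_succ (Nat.zero_le Bt)) (b 0)).symm

/-- Binomial coefficient with integer arguments, zero when `k < 0` or `k > n`. -/
def ch (n k : ℤ) : ℚ := if 0 ≤ k ∧ k ≤ n then (n.toNat.choose k.toNat : ℚ) else 0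

theorem ch_natCast (n k : ℕ) : ch n k = (n.choose k : ℚ) := by
  unfold ch
  rcases le_or_gt k n with h | h
  · rw [if_pos ⟨Int.natCast_nonneg k, by exact_mod_cast h⟩]
    simp
  · rw [if_neg (by push_neg; intro _; exact_mod_cast h), Nat.choose_eq_zero_of_lt h]
    simp

theorem ch_ne_zero {n k : ℤ} (h : ch n k ≠ 0) : 0 ≤ k ∧ k ≤ n := by
  by_contra hc
  exact h (if_neg hc)

theorem factor_eq (a c k : ℕ) (hca : c ≤ a) (hck : c ≤ k) :
    ch a k * ch k c = (a.choose c : ℚ) * ((a - c).choose (k - c) : ℚ) := by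
  rw [ch_natCast, ch_natCast]
  rcases le_or_gt k a with h | h
  · rw [← Nat.cast_mul, ← Nat.cast_mul, Nat.choose_mul hck]
  · rw [Nat.choose_eq_zero_of_lt h, Nat.choose_eq_zero_of_lt (by omega : a - c < k - c)]
    push_cast
    ring

theorem keyQ (B N' : ℕ) : (B:ℚ) * ((B-1).choose N') = (B.choose (N'+1)) * (N'+1) := by
  cases B with
  | zero => simp
  | succ B => exact_mod_cast Nat.add_one_mul_choose_eq B N'


theorem stmt1 (m n : ℕ) (hm : 1 ≤ m) (p : Fin m) (a c : Fin m → ℕ) :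
    (∑ k ∈ Finset.Nat.antidiagonalTuple m n, (∏ i, ch (a i) (k i) * ch (k i) (c i)) * (k p : ℚ)) * ((∑ i, (a i : ℚ)) - (∑ i, (c i : ℚ)))
      = ch ((∑ i, (a i : ℤ)) - ∑ i, (c i : ℤ)) ((n : ℤ) - ∑ i, (c i : ℤ)) * (∏ i, ch (a i) (c i))
        * (((n : ℚ) - (∑ i, (c i : ℚ))) * (a p : ℚ) + ((∑ i, (a i : ℚ)) - (n : ℚ)) * (c p : ℚ)) := by
  classical
  have castQA : (∑ i, (a i : ℚ)) = ((∑ i, a i : ℕ) : ℚ) := by push_cast; rfl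
  have castQC : (∑ i, (c i : ℚ)) = ((∑ i, c i : ℕ) : ℚ) := by push_cast; rfl
  have castZA : (∑ i, (a i : ℤ)) = ((∑ i, a i : ℕ) : ℤ) := by push_cast; rfl
  have castZC : (∑ i, (c i : ℤ)) = ((∑ i, c i : ℕ) : ℤ) := by push_cast; rfl
  rw [castQA, castQC, castZA, castZC]
  set A := ∑ i, a i with hA
  set C := ∑ i, c i with hC
  by_cases hac : ∀ i, c i ≤ a i
  · -- main case
    by_cases hn : n < C
    · -- RHS zero since n - C < 0
      have hRHS : ch ((A:ℤ) - C) ((n:ℤ) - C) = 0 := by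
        have hneg : (n:ℤ) - C < 0 := sub_neg.mpr (by exact_mod_cast hn)
        exact if_neg (by rintro ⟨h0, -⟩; exact absurd h0 (not_le.mpr hneg))
      have hLHS : ∀ k ∈ Finset.Nat.antidiagonalTuple m n,
          (∏ i, ch (a i) (k i) * ch (k i) (c i)) * (k p : ℚ) = 0 := by
        intro k hk
        rw [Finset.Nat.mem_antidiagonalTuple] at hk
        have : ∃ i, k i < c i := by
          by_contra hcon
          push_neg at hcon
          have := Finset.sum_le_sum (fun i (_ : i ∈ Finset.univ) => hcon i)
          omega
        obtain ⟨i0, hi0⟩ := this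
        have : ch (k i0) (c i0) = 0 := by
          apply if_neg; push_neg; intro _; exact_mod_cast hi0
        rw [Finset.prod_eq_zero (Finset.mem_univ i0) (by rw [this, mul_zero]), zero_mul]
      rw [Finset.sum_eq_zero hLHS, hRHS]
      ring
    · push_neg at hn
      obtain ⟨N, rfl⟩ : ∃ N, n = N + C := ⟨n - C, by omega⟩
      set b : Fin m → ℕ := fun i => a i - c i with hb
      have hCA : C ≤ A := by
        rw [hA, hC]
        exact Finset.sum_le_sum fun i _ => hac i
      set B := A - C with hBdef
      have hBsum : ∑ i, b i = B := by
        rw [hBdef, hA, hC, ← Finset.sum_tsub_distrib Finset.univ (fun i _ => hac i)]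
      have hbound : ∀ (k : Fin m → ℕ), ((∏ i, ch (a i) (k i) * ch (k i) (c i)) * (k p : ℚ)) ≠ 0 →
          ∀ i, c i ≤ k i ∧ k i ≤ a i := by
        intro k hk i
        have hprod : (∏ i, ch (a i) (k i) * ch (k i) (c i)) ≠ 0 := left_ne_zero_of_mul hk
        have hfac := Finset.prod_ne_zero_iff.mp hprod i (Finset.mem_univ i)
        have h1 := ch_ne_zero (left_ne_zero_of_mul hfac)
        have h2 := ch_ne_zero (right_ne_zero_of_mul hfac)
        exact ⟨by exact_mod_cast h2.2, by exact_mod_cast h1.2⟩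
      have hsum : (∑ k ∈ Finset.Nat.antidiagonalTuple m (N+C),
            (∏ i, ch (a i) (k i) * ch (k i) (c i)) * (k p : ℚ))
          = ∑ j ∈ Finset.Nat.antidiagonalTuple m N,
              (∏ i, ((a i).choose (c i):ℚ) * ((b i).choose (j i):ℚ)) * ((j p : ℚ) + (c p : ℚ)) := by
        refine Finset.sum_bij_ne_zero (fun k _ _ => fun i => k i - c i) ?_ ?_ ?_ ?_
        · intro k h1 h2
          rw [Finset.Nat.mem_antidiagonalTuple] at h1 ⊢
          have hbnd := hbound k h2
          have hss : ∑ i, (k i - c i) + ∑ i, c i = ∑ i, k i := by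
            rw [← Finset.sum_add_distrib]
            exact Finset.sum_congr rfl fun i _ => Nat.sub_add_cancel (hbnd i).1
          rw [h1, ← hC] at hss
          exact Nat.add_right_cancel hss
        · intro k1 h11 h12 k2 h21 h22 heq
          have hb1 := hbound k1 h12
          have hb2 := hbound k2 h22
          funext i
          have := congrFun heq i
          have e1 := Nat.sub_add_cancel (hb1 i).1
          have e2 := Nat.sub_add_cancel (hb2 i).1
          rw [← e1, ← e2, this]
        · intro j hj hgj
          have hjprod : (∏ i, ((a i).choose (c i):ℚ) * ((b i).choose (j i):ℚ)) ≠ 0 :=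
            left_ne_zero_of_mul hgj
          have hjb : ∀ i, j i ≤ b i := by
            intro i
            have hfac := Finset.prod_ne_zero_iff.mp hjprod i (Finset.mem_univ i)
            have := right_ne_zero_of_mul hfac
            by_contra hcon
            push_neg at hcon
            rw [Nat.choose_eq_zero_of_lt hcon] at this
            simp at this
          have hfeq : ((∏ i, ch (Nat.cast (a i)) (Nat.cast (j i + c i))
                * ch (Nat.cast (j i + c i)) (Nat.cast (c i))) * ((j p + c p : ℕ) : ℚ))
              = (∏ i, ((a i).choose (c i):ℚ) * ((b i).choose (j i):ℚ)) * ((j p : ℚ) + (c p : ℚ)) := by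
            congr 1
            · refine Finset.prod_congr rfl fun i _ => ?_
              rw [factor_eq (a i) (c i) (j i + c i) (hac i) (Nat.le_add_left _ _),
                Nat.add_sub_cancel]
            · push_cast
              ring
          refine ⟨fun i => j i + c i, ?_, ?_, ?_⟩
          · rw [Finset.Nat.mem_antidiagonalTuple] at hj ⊢
            rw [Finset.sum_add_distrib, hj, ← hC]
          · show (∏ i, ch (Nat.cast (a i)) (Nat.cast (j i + c i))
                * ch (Nat.cast (j i + c i)) (Nat.cast (c i))) * ((j p + c p : ℕ) : ℚ) ≠ 0
            rw [hfeq]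
            exact hgj
          · funext i
            show j i + c i - c i = j i
            exact Nat.add_sub_cancel _ _
        · intro k h1 h2
          have hbnd := hbound k h2
          congr 1
          · refine Finset.prod_congr rfl fun i _ => ?_
            exact factor_eq (a i) (c i) (k i) (hac i) (hbnd i).1
          · show (k p : ℚ) = ((k p - c p : ℕ) : ℚ) + (c p : ℚ)
            rw [← Nat.cast_add, Nat.sub_add_cancel (hbnd p).1]
      have hv : (∑ j ∈ Finset.Nat.antidiagonalTuple m N, ∏ i, ((b i).choose (j i):ℚ))
          = (B.choose N : ℚ) := by
        rw [← hBsum]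
        exact_mod_cast congrArg (Nat.cast : ℕ → ℚ) (vand m N b)
      have hw : (∑ j ∈ Finset.Nat.antidiagonalTuple m N,
            (∏ i, ((b i).choose (j i):ℚ)) * (j p : ℚ)) * (B : ℚ)
          = (B.choose N : ℚ) * (N : ℚ) * (b p : ℚ) := by
        cases N with
        | zero =>
          rw [Finset.Nat.antidiagonalTuple_zero_right]
          simp
        | succ N' =>
          have hcast : (∑ j ∈ Finset.Nat.antidiagonalTuple m (N'+1),
                (∏ i, ((b i).choose (j i):ℚ)) * (j p : ℚ))
              = ((b p * ((∑ i, b i) - 1).choose N' : ℕ) : ℚ) :=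
            mod_cast congrArg (Nat.cast : ℕ → ℚ) (vandw m N' b p)
          rw [hcast, hBsum]
          push_cast
          linear_combination ((b p : ℚ)) * keyQ B N'
      have hch : ch ((A:ℤ) - C) (((N+C : ℕ) : ℤ) - C) = (B.choose N : ℚ) := by
        have e1 : ((A:ℤ) - C) = ((B : ℕ) : ℤ) := by
          rw [hBdef]
          push_cast [Nat.cast_sub hCA]
          ring
        have e2 : (((N+C : ℕ) : ℤ) - C) = ((N : ℕ) : ℤ) := by push_cast; ring
        rw [e1, e2, ch_natCast]
      have hP : (∏ i, ch (a i) (c i)) = ∏ i, ((a i).choose (c i) : ℚ) :=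
        Finset.prod_congr rfl fun i _ => ch_natCast (a i) (c i)
      rw [hsum, hch, hP]
      have hsplit : (∑ j ∈ Finset.Nat.antidiagonalTuple m N,
            (∏ i, ((a i).choose (c i):ℚ) * ((b i).choose (j i):ℚ)) * ((j p : ℚ) + (c p : ℚ)))
          = (∏ i, ((a i).choose (c i) : ℚ)) * (∑ j ∈ Finset.Nat.antidiagonalTuple m N,
              (∏ i, ((b i).choose (j i):ℚ)) * (j p : ℚ))
            + (∏ i, ((a i).choose (c i) : ℚ)) * (c p : ℚ) * (∑ j ∈ Finset.Nat.antidiagonalTuple m N,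
              ∏ i, ((b i).choose (j i):ℚ)) := by
        rw [Finset.mul_sum, Finset.mul_sum, ← Finset.sum_add_distrib]
        refine Finset.sum_congr rfl fun j _ => ?_
        rw [Finset.prod_mul_distrib]
        ring
      rw [hsplit, hv]
      have hABQ : (A : ℚ) = (B : ℚ) + (C : ℚ) := by
        rw [hBdef]
        push_cast [Nat.cast_sub hCA]
        ring
      have hap : (a p : ℚ) = (b p : ℚ) + (c p : ℚ) := by
        rw [hb]
        push_cast [Nat.cast_sub (hac p)]
        ring
      rw [hABQ, hap]
      push_cast
      linear_combination (∏ i, ((a i).choose (c i) : ℚ)) * hw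
  · -- some a i < c i : both sides are zero
    push_neg at hac
    obtain ⟨i0, hi0⟩ := hac
    have hprod0 : ∀ (k : Fin m → ℕ), (∏ i, ch (a i) (k i) * ch (k i) (c i)) = 0 := by
      intro k
      refine Finset.prod_eq_zero (Finset.mem_univ i0) ?_
      rcases eq_or_ne (ch (a i0) (k i0)) 0 with h | h
      · rw [h, zero_mul]
      · have hk := (ch_ne_zero h).2
        have : ch (k i0) (c i0) = 0 := by
          apply if_neg; push_neg; intro _
          have : (k i0 : ℤ) ≤ a i0 := hk
          push_cast
          omega
        rw [this, mul_zero]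
    have h2 : (∏ i, ch (a i) (c i)) = 0 := by
      refine Finset.prod_eq_zero (Finset.mem_univ i0) ?_
      apply if_neg; push_neg; intro _; exact_mod_cast hi0
    rw [h2]
    rw [Finset.sum_eq_zero fun k _ => by rw [hprod0 k, zero_mul]]
    ring
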